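/- Let E be a real Banach space, a < b, and L : ℝ × E × E → ℝ twice continuously Fréchet differentiable. Suppose x ∈ C¹([a,b];E) is a local minimizer (in the C¹ norm) of J[y] = ∫_a^b L(t,y(t),ẏ(t)) dt among curves with the same endpoint values. Then the map t ↦ D_vL(t,x(t),ẋ(t)), with values in the dual space E* = (E →L[ℝ] ℝ), is differentiable on [a,b], and for every t ∈ [a,b] it satisfies the Euler–Lagrange equation d/dt [ D_vL(t,x(t),ẋ(t)) ] = D_xL(t,x(t),ẋ(t)) as an identity in E*. -/

import Mathlib

/-!
Perturb the minimizer to `x + σ • η` with `η = φ • e`, where `e : E` and `φ` is a scalar `C¹`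
function vanishing at `a` and `b`. The action then has a local minimum at `σ = 0`, and
differentiating under the integral gives `∫ φ D_xL e + φ' D_vL e = 0`. Integrating the first term
by parts shows that `D_vL e - ∫ₐ D_xL e` is orthogonal to every `φ'`, hence constant
(du Bois-Reymond). Thus `D_vL(t) = D_vL(a) + ∫ₐᵗ D_xL` in `E →L[ℝ] ℝ`, and the fundamental
theorem of calculus concludes.
-/

open Set MeasureTheory intervalIntegral Metric Topology Filter
open scoped Interval

section Slices

variable {S F G W : Type*} [NormedAddCommGroup S] [NormedSpace ℝ S] [NormedAddCommGroup F]
  [NormedSpace ℝ F] [NormedAddCommGroup G] [NormedSpace ℝ G] [NormedAddCommGroup W]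
  [NormedSpace ℝ W] {L : S × F × G → W} {t : S} {y : F} {v : G}

theorem DifferentiableAt.fderiv_slice_middle (hL : DifferentiableAt ℝ L (t, y, v)) :
    fderiv ℝ (fun y => L (t, y, v)) y =
      (fderiv ℝ L (t, y, v)).comp
        ((ContinuousLinearMap.inr ℝ S (F × G)).comp (ContinuousLinearMap.inl ℝ F G)) :=
  (hL.hasFDerivAt.comp y
    ((hasFDerivAt_prodMk_right t (y, v)).comp y (hasFDerivAt_prodMk_left y v))).fderiv

theorem DifferentiableAt.fderiv_slice_last (hL : DifferentiableAt ℝ L (t, y, v)) :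
    fderiv ℝ (fun v => L (t, y, v)) v =
      (fderiv ℝ L (t, y, v)).comp
        ((ContinuousLinearMap.inr ℝ S (F × G)).comp (ContinuousLinearMap.inr ℝ F G)) :=
  (hL.hasFDerivAt.comp v
    ((hasFDerivAt_prodMk_right t (y, v)).comp v (hasFDerivAt_prodMk_right y v))).fderiv

theorem DifferentiableAt.fderiv_apply_zero_mk (hL : DifferentiableAt ℝ L (t, y, v)) (u : F)
    (w : G) :
    fderiv ℝ L (t, y, v) (0, u, w) =
      fderiv ℝ (fun y => L (t, y, v)) y u + fderiv ℝ (fun v => L (t, y, v)) v w := by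
  simp only [hL.fderiv_slice_middle, hL.fderiv_slice_last, ContinuousLinearMap.coe_comp,
    Function.comp_apply, ← map_add]
  simp

end Slices

theorem hasDerivAt_intervalIntegral_comp_add_smul {F W : Type*} [NormedAddCommGroup F]
    [NormedSpace ℝ F] [NormedAddCommGroup W] [NormedSpace ℝ W] {L : F → W}
    (hL : ContDiff ℝ 1 L) {a b : ℝ} (hab : a ≤ b) {γ w : ℝ → F}
    (hγ : ContinuousOn γ (Icc a b)) (hw : ContinuousOn w (Icc a b)) :
    HasDerivAt (fun σ : ℝ => ∫ s in a..b, L (γ s + σ • w s))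
      (∫ s in a..b, fderiv ℝ L (γ s) (w s)) 0 := by
  have hI : Ι a b ⊆ Icc a b := uIoc_of_le hab ▸ Ioc_subset_Icc_self
  have hcurve : ∀ σ : ℝ, ContinuousOn (fun s => γ s + σ • w s) (Icc a b) :=
    fun σ => hγ.add (hw.const_smul σ)
  have hdL : ContinuousOn (fun p : ℝ × ℝ => fderiv ℝ L (γ p.1 + p.2 • w p.1))
      (Icc a b ×ˢ closedBall 0 1) :=
    (hL.continuous_fderiv one_ne_zero).comp_continuousOn
      ((hγ.comp continuousOn_fst fun _ hp => hp.1).add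
        (continuousOn_snd.smul (hw.comp continuousOn_fst fun _ hp => hp.1)))
  obtain ⟨C, hC⟩ := (isCompact_Icc.prod (isCompact_closedBall 0 1)).exists_bound_of_continuousOn hdL
  obtain ⟨C', hC'⟩ := isCompact_Icc.exists_bound_of_continuousOn hw
  have hbound : ∀ s ∈ Icc a b, ∀ σ ∈ ball (0 : ℝ) 1,
      ‖fderiv ℝ L (γ s + σ • w s) (w s)‖ ≤ C * C' := fun s hs σ hσ =>
    (ContinuousLinearMap.le_opNorm _ _).trans
      (mul_le_mul (hC (s, σ) ⟨hs, ball_subset_closedBall hσ⟩) (hC' s hs) (norm_nonneg _)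
        ((norm_nonneg _).trans (hC (s, σ) ⟨hs, ball_subset_closedBall hσ⟩)))
  have hderiv : ∀ s σ : ℝ, HasDerivAt (fun σ : ℝ => L (γ s + σ • w s))
      (fderiv ℝ L (γ s + σ • w s) (w s)) σ := fun s σ =>
    ((hL.differentiable one_ne_zero) _).hasFDerivAt.comp_hasDerivAt σ
      (((hasDerivAt_id σ).smul_const (w s)).const_add (γ s) |>.congr_deriv (one_smul ℝ _))
  simpa using (hasDerivAt_integral_of_dominated_loc_of_deriv_le (ball_mem_nhds 0 one_pos)
    (Eventually.of_forall fun σ =>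
      ((hL.continuous.comp_continuousOn (hcurve σ)).mono hI).aestronglyMeasurable
        measurableSet_uIoc)
    ((hL.continuous.comp_continuousOn (hcurve 0)).intervalIntegrable_of_Icc hab)
    ((((hL.continuous_fderiv one_ne_zero).comp_continuousOn (hcurve 0)).clm_apply hw).mono
      hI |>.aestronglyMeasurable measurableSet_uIoc)
    (ae_of_all _ fun s hs => hbound s (hI hs)) intervalIntegrable_const
    (ae_of_all _ fun s _ σ _ => hderiv s σ)).2

section Variation

variable {E : Type*} [NormedAddCommGroup E] [NormedSpace ℝ E] {L : ℝ × E × E → ℝ} {a b ε : ℝ}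
  {x x' η η' : ℝ → E}

theorem isLocalMin_action_add_smul (hε : 0 < ε)
    (hmin : ∀ y y' : ℝ → E,
      (∀ t ∈ Icc a b, HasDerivWithinAt y (y' t) (Icc a b) t) → ContinuousOn y' (Icc a b) →
      y a = x a → y b = x b → (∀ t ∈ Icc a b, ‖y t - x t‖ + ‖y' t - x' t‖ ≤ ε) →
      (∫ t in a..b, L (t, x t, x' t)) ≤ ∫ t in a..b, L (t, y t, y' t))
    (hx : ∀ t ∈ Icc a b, HasDerivWithinAt x (x' t) (Icc a b) t) (hx' : ContinuousOn x' (Icc a b))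
    (hη : ∀ t ∈ Icc a b, HasDerivWithinAt η (η' t) (Icc a b) t) (hη' : ContinuousOn η' (Icc a b))
    (hηa : η a = 0) (hηb : η b = 0) :
    IsLocalMin (fun σ : ℝ => ∫ t in a..b, L (t, x t + σ • η t, x' t + σ • η' t)) 0 := by
  have hηc : ContinuousOn η (Icc a b) := fun t ht => (hη t ht).continuousWithinAt
  obtain ⟨M, hM⟩ := isCompact_Icc.exists_bound_of_continuousOn (hηc.norm.add hη'.norm)
  have hsmall : ∀ᶠ σ : ℝ in 𝓝 0, |σ| * M ≤ ε :=
    ((continuous_abs.mul continuous_const).tendsto' 0 0 (by simp)).eventually (ge_mem_nhds hε)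
  filter_upwards [hsmall] with σ hσ
  have hclose : ∀ t ∈ Icc a b, ‖x t + σ • η t - x t‖ + ‖x' t + σ • η' t - x' t‖ ≤ ε :=
    fun t ht => calc
      _ = |σ| * (‖η t‖ + ‖η' t‖) := by simp [norm_smul, mul_add]
      _ ≤ |σ| * M := mul_le_mul_of_nonneg_left ((le_abs_self _).trans (hM t ht)) (abs_nonneg σ)
      _ ≤ ε := hσ
  simpa using hmin (fun t => x t + σ • η t) (fun t => x' t + σ • η' t)
    (fun t ht => (hx t ht).add ((hη t ht).const_smul σ)) (hx'.add (hη'.const_smul σ))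
    (by simp [hηa]) (by simp [hηb]) hclose

theorem integral_fderiv_variation_eq_zero (hL : ContDiff ℝ 1 L) (hab : a ≤ b) (hε : 0 < ε)
    (hmin : ∀ y y' : ℝ → E,
      (∀ t ∈ Icc a b, HasDerivWithinAt y (y' t) (Icc a b) t) → ContinuousOn y' (Icc a b) →
      y a = x a → y b = x b → (∀ t ∈ Icc a b, ‖y t - x t‖ + ‖y' t - x' t‖ ≤ ε) →
      (∫ t in a..b, L (t, x t, x' t)) ≤ ∫ t in a..b, L (t, y t, y' t))
    (hx : ∀ t ∈ Icc a b, HasDerivWithinAt x (x' t) (Icc a b) t) (hx' : ContinuousOn x' (Icc a b))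
    (hη : ∀ t ∈ Icc a b, HasDerivWithinAt η (η' t) (Icc a b) t) (hη' : ContinuousOn η' (Icc a b))
    (hηa : η a = 0) (hηb : η b = 0) :
    ∫ t in a..b, (fderiv ℝ (fun y => L (t, y, x' t)) (x t) (η t) +
      fderiv ℝ (fun v => L (t, x t, v)) (x' t) (η' t)) = 0 := by
  have hxc : ContinuousOn x (Icc a b) := fun t ht => (hx t ht).continuousWithinAt
  have hηc : ContinuousOn η (Icc a b) := fun t ht => (hη t ht).continuousWithinAt
  have hder := hasDerivAt_intervalIntegral_comp_add_smul hL hab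
    (γ := fun t => (t, x t, x' t)) (w := fun t => (0, η t, η' t))
    (continuousOn_id.prodMk (hxc.prodMk hx')) (continuousOn_const.prodMk (hηc.prodMk hη'))
  simp only [Prod.smul_mk, smul_zero, Prod.mk_add_mk, add_zero,
    ((hL.differentiable one_ne_zero) _).fderiv_apply_zero_mk] at hder
  exact (isLocalMin_action_add_smul hε hmin hx hx' hη hη' hηa hηb).hasDerivAt_eq_zero hder

end Variation

theorem ContinuousOn.hasDerivWithinAt_intervalIntegral {F : Type*} [NormedAddCommGroup F]
    [NormedSpace ℝ F] [CompleteSpace F] {f : ℝ → F} {a b t : ℝ} (hf : ContinuousOn f (Icc a b))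
    (ht : t ∈ Icc a b) :
    HasDerivWithinAt (fun u => ∫ s in a..u, f s) (f t) (Icc a b) t :=
  have : Fact (t ∈ Icc a b) := ⟨ht⟩
  integral_hasDerivWithinAt_right
    ((hf.mono (Icc_subset_Icc_right ht.2)).intervalIntegrable_of_Icc ht.1)
    ⟨Icc a b, self_mem_nhdsWithin, hf.aestronglyMeasurable measurableSet_Icc⟩ (hf t ht)

section DuBoisReymond

variable {a b : ℝ}

theorem eqOn_of_forall_integral_deriv_mul_eq_zero (hab : a < b) {g : ℝ → ℝ}
    (hg : ContinuousOn g (Icc a b))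
    (hvar : ∀ φ φ' : ℝ → ℝ, (∀ s ∈ Icc a b, HasDerivWithinAt φ (φ' s) (Icc a b) s) →
      ContinuousOn φ' (Icc a b) → φ a = 0 → φ b = 0 → ∫ s in a..b, φ' s * g s = 0) :
    ∀ t ∈ Icc a b, g t = g a := by
  set c := (∫ s in a..b, g s) / (b - a)
  have hgc : ContinuousOn (fun s => g s - c) (Icc a b) := hg.sub continuousOn_const
  have hmean : ∫ s in a..b, (g s - c) = 0 := by
    rw [integral_sub (hg.intervalIntegrable_of_Icc hab.le) intervalIntegrable_const,
      intervalIntegral.integral_const, smul_eq_mul, mul_div_cancel₀ _ (sub_ne_zero.2 hab.ne'),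
      sub_self]
  -- Test against the primitive of `g - c`, which vanishes at both ends because `c` is the mean.
  have horth : ∫ s in a..b, (g s - c) * g s = 0 :=
    hvar _ _ (fun s hs => hgc.hasDerivWithinAt_intervalIntegral hs) hgc integral_same hmean
  have hsq : ∫ s in a..b, (g s - c) ^ 2 = 0 := calc
    _ = ∫ s in a..b, ((g s - c) * g s - (g s - c) * c) := by congr 1; ext s; ring
    _ = (∫ s in a..b, (g s - c) * g s) - (∫ s in a..b, (g s - c)) * c := by
      rw [integral_sub (f := fun s => (g s - c) * g s) (g := fun s => (g s - c) * c)
        ((hgc.mul hg).intervalIntegrable_of_Icc hab.le)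
        ((hgc.mul continuousOn_const).intervalIntegrable_of_Icc hab.le),
        intervalIntegral.integral_mul_const]
    _ = 0 := by rw [horth, hmean, zero_mul, sub_zero]
  have hae : (fun s => (g s - c) ^ 2) =ᵐ[volume.restrict (Ioc a b)] 0 :=
    (integral_eq_zero_iff_of_le_of_nonneg_ae hab.le (ae_of_all _ fun s => sq_nonneg _)
      ((hgc.pow 2).intervalIntegrable_of_Icc hab.le)).1 hsq
  rw [Measure.restrict_congr_set Ioc_ae_eq_Icc] at hae
  have hconst : EqOn g (fun _ => c) (Icc a b) :=
    Measure.eqOn_Icc_of_ae_eq volume hab.ne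
      (hae.mono fun s hs => by simpa [sub_eq_zero] using hs) hg continuousOn_const
  intro t ht
  rw [hconst ht, hconst (left_mem_Icc.2 hab.le)]

theorem eq_add_integral_of_forall_integral_eq_zero (hab : a < b) {g h : ℝ → ℝ}
    (hg : ContinuousOn g (Icc a b)) (hh : ContinuousOn h (Icc a b))
    (hvar : ∀ φ φ' : ℝ → ℝ, (∀ s ∈ Icc a b, HasDerivWithinAt φ (φ' s) (Icc a b) s) →
      ContinuousOn φ' (Icc a b) → φ a = 0 → φ b = 0 →
      ∫ s in a..b, (φ s * h s + φ' s * g s) = 0) :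
    ∀ t ∈ Icc a b, g t = g a + ∫ s in a..t, h s := by
  set H := fun t => ∫ s in a..t, h s
  have hH : ∀ t ∈ Icc a b, HasDerivWithinAt H (h t) (Icc a b) t :=
    fun t ht => hh.hasDerivWithinAt_intervalIntegral ht
  have hHc : ContinuousOn H (Icc a b) := fun t ht => (hH t ht).continuousWithinAt
  have hconst := eqOn_of_forall_integral_deriv_mul_eq_zero (g := fun s => g s - H s) hab
    (hg.sub hHc)
    fun φ φ' hφ hφ' hφa hφb => by
      have hφc : ContinuousOn φ (Icc a b) := fun s hs => (hφ s hs).continuousWithinAt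
      have hparts : ∫ s in a..b, (φ' s * H s + φ s * h s) = 0 := by
        rw [integral_deriv_mul_eq_sub_of_hasDerivWithinAt (by rwa [uIcc_of_le hab.le])
          (by rwa [uIcc_of_le hab.le]) (hφ'.intervalIntegrable_of_Icc hab.le)
          (hh.intervalIntegrable_of_Icc hab.le), hφa, hφb, zero_mul, zero_mul, sub_zero]
      calc ∫ s in a..b, φ' s * (g s - H s)
          = (∫ s in a..b, (φ s * h s + φ' s * g s)) -
              ∫ s in a..b, (φ' s * H s + φ s * h s) := by
            rw [← integral_sub (f := fun s => φ s * h s + φ' s * g s)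
              (g := fun s => φ' s * H s + φ s * h s)
              (((hφc.mul hh).add (hφ'.mul hg)).intervalIntegrable_of_Icc hab.le)
              (((hφ'.mul hHc).add (hφc.mul hh)).intervalIntegrable_of_Icc hab.le)]
            congr 1; ext s; ring
        _ = 0 := by rw [hvar φ φ' hφ hφ' hφa hφb, hparts, sub_zero]
  intro t ht
  have := hconst t ht
  simp only [H, integral_same, sub_zero] at this
  linarith

end DuBoisReymond

theorem euler_lagrange_general
    {E : Type*} [NormedAddCommGroup E] [NormedSpace ℝ E]
    (a b : ℝ) (hab : a < b)
    (L : ℝ × E × E → ℝ) (hL : ContDiff ℝ 2 L)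
    (x x' : ℝ → E)
    (hx : ∀ t ∈ Set.Icc a b, HasDerivWithinAt x (x' t) (Set.Icc a b) t)
    (hx' : ContinuousOn x' (Set.Icc a b))
    (hmin : ∃ ε > (0 : ℝ), ∀ y y' : ℝ → E,
      (∀ t ∈ Set.Icc a b, HasDerivWithinAt y (y' t) (Set.Icc a b) t) →
      ContinuousOn y' (Set.Icc a b) →
      y a = x a → y b = x b →
      (∀ t ∈ Set.Icc a b, ‖y t - x t‖ + ‖y' t - x' t‖ ≤ ε) →
      (∫ t in a..b, L (t, x t, x' t)) ≤ ∫ t in a..b, L (t, y t, y' t)) :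
    ∀ t ∈ Set.Icc a b,
      HasDerivWithinAt (fun τ => fderiv ℝ (fun v => L (τ, x τ, v)) (x' τ))
        (fderiv ℝ (fun y => L (t, y, x' t)) (x t)) (Set.Icc a b) t := by
  obtain ⟨ε, hε, hmin⟩ := hmin
  have hL1 : ContDiff ℝ 1 L := hL.of_le one_le_two
  have hLd : Differentiable ℝ L := hL1.differentiable one_ne_zero
  set P := fun τ => fderiv ℝ (fun v => L (τ, x τ, v)) (x' τ)
  set A := fun τ => fderiv ℝ (fun y => L (τ, y, x' τ)) (x τ)
  have hDL : ContinuousOn (fun τ => fderiv ℝ L (τ, x τ, x' τ)) (Icc a b) :=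
    (hL1.continuous_fderiv one_ne_zero).comp_continuousOn
      (continuousOn_id.prodMk (ContinuousOn.prodMk (fun t ht => (hx t ht).continuousWithinAt) hx'))
  have hP : ContinuousOn P (Icc a b) := by
    simpa only [P, (hLd _).fderiv_slice_last] using hDL.clm_comp continuousOn_const
  have hA : ContinuousOn A (Icc a b) := by
    simpa only [A, (hLd _).fderiv_slice_middle] using hDL.clm_comp continuousOn_const
  have hEL : ∀ τ ∈ Icc a b, P τ = P a + ∫ s in a..τ, A s := fun τ hτ => by
    ext e
    rw [add_apply, ContinuousLinearMap.intervalIntegral_apply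
      ((hA.mono (Icc_subset_Icc_right hτ.2)).intervalIntegrable_of_Icc hτ.1)]
    refine eq_add_integral_of_forall_integral_eq_zero hab (hP.clm_apply continuousOn_const)
      (hA.clm_apply continuousOn_const) (fun φ φ' hφ hφ' hφa hφb => ?_) τ hτ
    simpa using integral_fderiv_variation_eq_zero hL1 hab.le hε hmin hx hx'
      (η := fun s => φ s • e) (η' := fun s => φ' s • e) (fun s hs => (hφ s hs).smul_const e)
      (hφ'.smul continuousOn_const) (by simp [hφa]) (by simp [hφb])
  intro t ht
  exact ((hA.hasDerivWithinAt_intervalIntegral ht).const_add (P a)).congr hEL (hEL t ht)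

/-- **Euler–Lagrange equation on a Banach space.**
If `L` is twice continuously Fréchet differentiable and `x ∈ C¹([a,b];E)` is a
local minimizer (w.r.t. the `C¹` norm) of `J[y] = ∫_a^b L(t,y,ẏ) dt` among
curves with the same endpoint values, then `t ↦ D_v L(t,x(t),ẋ(t))` (with
values in `E* = E →L[ℝ] ℝ`) is differentiable on `[a,b]` and satisfies
`d/dt [D_v L(t,x(t),ẋ(t))] = D_x L(t,x(t),ẋ(t))` for all `t ∈ [a,b]`. -/
theorem euler_lagrange
    {E : Type*} [NormedAddCommGroup E] [NormedSpace ℝ E] [CompleteSpace E]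
    (a b : ℝ) (hab : a < b)
    (L : ℝ × E × E → ℝ) (hL : ContDiff ℝ 2 L)
    (x x' : ℝ → E)
    (hx : ∀ t ∈ Set.Icc a b, HasDerivWithinAt x (x' t) (Set.Icc a b) t)
    (hx' : ContinuousOn x' (Set.Icc a b))
    (hmin : ∃ ε > (0 : ℝ), ∀ y y' : ℝ → E,
      (∀ t ∈ Set.Icc a b, HasDerivWithinAt y (y' t) (Set.Icc a b) t) →
      ContinuousOn y' (Set.Icc a b) →
      y a = x a → y b = x b →
      (∀ t ∈ Set.Icc a b, ‖y t - x t‖ + ‖y' t - x' t‖ ≤ ε) →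
      (∫ t in a..b, L (t, x t, x' t)) ≤ ∫ t in a..b, L (t, y t, y' t)) :
    ∀ t ∈ Set.Icc a b,
      HasDerivWithinAt (fun τ => fderiv ℝ (fun v => L (τ, x τ, v)) (x' τ))
        (fderiv ℝ (fun y => L (t, y, x' t)) (x t)) (Set.Icc a b) t :=
  euler_lagrange_general a b hab L hL x x' hx hx' hmin
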